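/- arXiv:1103.3817 — 3 statements merged into one kernel-verified Lean document; each statement's English description precedes it below -/
import Mathlib

section
/- Let q ∈ L²([0,1],ℝ) and define f(t) = f(0) + ∫₀ᵗ q(s)|q(s)| ds. Then f is absolutely continuous and its square-root velocity function equals q almost everywhere, i.e., f'(t)/√|f'(t)| = q(t) for a.e. t. -/
open MeasureTheory Set intervalIntegral

noncomputable def Q (x : ℝ) : ℝ := x / Real.sqrt |x|

/-- `γ` is an orientation-preserving diffeomorphism of `[0,1]` fixing the endpoints,
with (positive, continuous) derivative `γd`. -/
def IsWarping (γ γd : ℝ → ℝ) : Prop :=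
  γ 0 = 0 ∧ γ 1 = 1 ∧ Set.MapsTo γ (Set.Icc 0 1) (Set.Icc 0 1) ∧
  (∀ t ∈ Set.Icc (0:ℝ) 1, HasDerivAt γ (γd t) t) ∧
  (∀ t ∈ Set.Icc (0:ℝ) 1, 0 < γd t) ∧
  ContinuousOn γd (Set.Icc 0 1)

/-
Since `q ∈ L²`, Cauchy–Schwarz makes `q|q|` integrable on `[0,1]`, so by the Lebesgue
differentiation theorem `f` is differentiable almost everywhere with derivative `q|q|`; and `Q`
inverts `x ↦ x|x|`.
-/
theorem Q_mul_abs (a : ℝ) : Q (a * |a|) = a := by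
  rcases eq_or_ne a 0 with rfl | ha
  · simp [Q]
  · rw [Q, abs_mul, abs_abs, Real.sqrt_mul_self (abs_nonneg a), mul_div_assoc,
      div_self (abs_ne_zero.2 ha), mul_one]

/-- If `q ∈ L²([0,1])` and `f(t) = f(0) + ∫₀ᵗ q(s)|q(s)| ds`, then `f` is absolutely
continuous (it is an indefinite integral of an integrable derivative `f'`) and its SRVF
equals `q` almost everywhere: `Q(f'(t)) = q(t)` for a.e. `t ∈ [0,1]`. -/
theorem srvf_of_indefinite_integral (q : ℝ → ℝ)
    (hq : MemLp q 2 (volume.restrict (Icc (0:ℝ) 1)))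
    (f0 : ℝ) (f : ℝ → ℝ) (hf : f = fun t => f0 + ∫ s in (0:ℝ)..t, q s * |q s|) :
    ∃ f' : ℝ → ℝ, IntegrableOn f' (Icc (0:ℝ) 1) ∧
      (∀ t ∈ Icc (0:ℝ) 1, f t = f 0 + ∫ s in (0:ℝ)..t, f' s) ∧
      (∀ᵐ t ∂(volume.restrict (Icc (0:ℝ) 1)), HasDerivAt f (f' t) t) ∧
      (∀ᵐ t ∂(volume.restrict (Icc (0:ℝ) 1)), Q (f' t) = q t) := by
  have hint : IntegrableOn (fun t => q t * |q t|) (Icc (0:ℝ) 1) := hq.integrable_mul hq.abs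
  have hderiv := ((intervalIntegrable_iff_integrableOn_Icc_of_le zero_le_one).2
    hint).ae_hasDerivAt_integral
  refine ⟨fun t => q t * |q t|, hint, fun t _ => by simp [hf], ?_,
    ae_of_all _ fun t => Q_mul_abs (q t)⟩
  filter_upwards [ae_restrict_of_ae hderiv, ae_restrict_mem measurableSet_Icc] with t ht hmem
  rw [uIcc_of_le zero_le_one] at ht
  exact hf ▸ (ht hmem 0 (left_mem_Icc.2 zero_le_one)).const_add f0
end

section
/- Let q ∈ L²([0,1],ℝ) be such that the set {t ∈ [0,1] : q(t) = 0} has Lebesgue measure zero, and let c > 0. If γ* ∈ Γ satisfies ‖cq − (q,γ*)‖ ≤ ‖cq − (q,γ)‖ for all γ ∈ Γ, then γ* = γ_id. -/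
/-!
Warping is an isometry of `L²[0,1]` (change of variables), so `‖(q,γ*)‖ = ‖q‖`. Expanding
`‖c q − (q,γ*)‖² ≤ ‖c q − q‖²`, minimality against `γ = id`, then gives `c ‖q − (q,γ*)‖² ≤ 0`,
i.e. `(q,γ*) = q` a.e. Integrating `(q,γ*)² = q²` over `[0,t]` and changing variables again gives
`F (γ* t) = F t` for `F t = ∫₀ᵗ q²`, and `F` is strictly increasing since `q` vanishes only on a
null set.
-/

open MeasureTheory Set intervalIntegral

open scoped ENNReal

theorem ae_eq_of_integral_sq_const_mul_sub_le {α : Type*} [MeasurableSpace α] {μ : Measure α}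
    {f g : α → ℝ} {c : ℝ} (hc : 0 < c) (hf : MemLp f 2 μ) (hg : MemLp g 2 μ)
    (hnorm : ∫ x, g x ^ 2 ∂μ = ∫ x, f x ^ 2 ∂μ)
    (hle : ∫ x, (c * f x - g x) ^ 2 ∂μ ≤ ∫ x, (c * f x - f x) ^ 2 ∂μ) : f =ᵐ[μ] g := by
  have hcf := hf.const_mul c
  have hi₁ : Integrable (fun x => (c * f x - g x) ^ 2) μ := (hcf.sub hg).integrable_sq
  have hi₂ : Integrable (fun x => (c * f x - f x) ^ 2) μ := (hcf.sub hf).integrable_sq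
  have hdist : c * ∫ x, (f x - g x) ^ 2 ∂μ ≤ 0 :=
    calc c * ∫ x, (f x - g x) ^ 2 ∂μ
        = ∫ x, ((c * f x - g x) ^ 2 - (c * f x - f x) ^ 2 + (c - 1) * (g x ^ 2 - f x ^ 2)) ∂μ := by
          rw [← MeasureTheory.integral_const_mul]; congr 1; ext x; ring
      _ = (∫ x, (c * f x - g x) ^ 2 ∂μ - ∫ x, (c * f x - f x) ^ 2 ∂μ)
            + (c - 1) * (∫ x, g x ^ 2 ∂μ - ∫ x, f x ^ 2 ∂μ) := by
          rw [MeasureTheory.integral_add, MeasureTheory.integral_sub hi₁ hi₂,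
            MeasureTheory.integral_const_mul,
            MeasureTheory.integral_sub hg.integrable_sq hf.integrable_sq]
          · exact hi₁.sub hi₂
          · exact (hg.integrable_sq.sub hf.integrable_sq).const_mul _
      _ ≤ 0 := by rw [hnorm]; linarith
  have hzero : ∫ x, (f x - g x) ^ 2 ∂μ = 0 :=
    le_antisymm (nonpos_of_mul_nonpos_right hdist hc) (integral_nonneg fun x => sq_nonneg _)
  filter_upwards [(integral_eq_zero_iff_of_nonneg (fun x => sq_nonneg (f x - g x))
    (hf.sub hg).integrable_sq).1 hzero] with x hx
  exact sub_eq_zero.1 (pow_eq_zero_iff two_ne_zero |>.1 hx)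

theorem strictMonoOn_setIntegral_Icc {f : ℝ → ℝ} {a b : ℝ} (hf : IntegrableOn f (Icc a b))
    (hf_nonneg : 0 ≤ f) (hzero : volume {x ∈ Icc a b | f x = 0} = 0) :
    StrictMonoOn (fun t => ∫ x in Icc a t, f x) (Icc a b) := by
  intro s hs t ht hst
  have hsub : Ioc s t ⊆ Icc a b := Ioc_subset_Icc_self.trans (Icc_subset_Icc hs.1 ht.2)
  have hpos : 0 < ∫ x in Ioc s t, f x := by
    rw [setIntegral_pos_iff_support_of_nonneg_ae (.of_forall hf_nonneg) (hf.mono_set hsub)]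
    calc (0 : ℝ≥0∞) < volume (Ioc s t) := by simp [hst]
      _ = volume (Ioc s t \ {x ∈ Icc a b | f x = 0}) := (measure_sdiff_null hzero).symm
      _ ≤ volume (Function.support f ∩ Ioc s t) :=
          measure_mono fun x ⟨hx, hx0⟩ => ⟨fun h => hx0 ⟨hsub hx, h⟩, hx⟩
  have hsplit : ∫ x in Icc a t, f x = (∫ x in Icc a s, f x) + ∫ x in Ioc s t, f x := by
    rw [← Icc_union_Ioc_eq_Icc hs.1 hst.le]
    exact setIntegral_union ((Iic_disjoint_Ioc le_rfl).mono_left Icc_subset_Iic_self)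
      measurableSet_Ioc (hf.mono_set (Icc_subset_Icc le_rfl hs.2)) (hf.mono_set hsub)
  change ∫ x in Icc a s, f x < ∫ x in Icc a t, f x
  rw [hsplit]
  exact lt_add_of_pos_right _ hpos

-- The paper's `(q, γ)`; `γd` stands for `γ'`.
noncomputable def warpAction (q γ γd : ℝ → ℝ) (t : ℝ) : ℝ := q (γ t) * Real.sqrt (γd t)

namespace IsWarping

variable {γ γd : ℝ → ℝ}

theorem id : IsWarping id (fun _ => 1) :=
  ⟨rfl, rfl, fun _ ht => ht, fun t _ => hasDerivAt_id t, fun _ _ => one_pos, continuousOn_const⟩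

theorem continuousOn (hw : IsWarping γ γd) : ContinuousOn γ (Icc 0 1) := by
  obtain ⟨-, -, -, hderiv, -⟩ := hw
  exact fun t ht => (hderiv t ht).continuousAt.continuousWithinAt

theorem strictMonoOn (hw : IsWarping γ γd) : StrictMonoOn γ (Icc 0 1) := by
  refine strictMonoOn_of_deriv_pos (convex_Icc (0 : ℝ) 1) hw.continuousOn fun x hx => ?_
  obtain ⟨-, -, -, hderiv, hpos, -⟩ := hw
  rw [interior_Icc] at hx
  rw [(hderiv x (Ioo_subset_Icc_self hx)).deriv]
  exact hpos x (Ioo_subset_Icc_self hx)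

theorem image_Icc_zero (hw : IsWarping γ γd) {t : ℝ} (ht : t ∈ Icc (0 : ℝ) 1) :
    γ '' Icc 0 t = Icc 0 (γ t) := by
  have hsub : Icc (0 : ℝ) t ⊆ Icc 0 1 := Icc_subset_Icc le_rfl ht.2
  refine Subset.antisymm ?_ ?_
  · rintro _ ⟨x, hx, rfl⟩
    have hmono := hw.strictMonoOn.monotoneOn
    exact ⟨hw.1 ▸ hmono ⟨le_rfl, zero_le_one⟩ (hsub hx) hx.1, hmono (hsub hx) ht hx.2⟩
  · simpa only [hw.1] using intermediate_value_Icc ht.1 (hw.continuousOn.mono hsub)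

theorem setIntegral_Icc_comp_mul (hw : IsWarping γ γd) {t : ℝ} (ht : t ∈ Icc (0 : ℝ) 1)
    (f : ℝ → ℝ) : ∫ x in Icc 0 t, γd x * f (γ x) = ∫ x in Icc 0 (γ t), f x := by
  have hsub : Icc (0 : ℝ) t ⊆ Icc 0 1 := Icc_subset_Icc le_rfl ht.2
  rw [← hw.image_Icc_zero ht, integral_image_eq_integral_abs_deriv_smul measurableSet_Icc
    (fun x hx => (hw.2.2.2.1 x (hsub hx)).hasDerivWithinAt) (hw.strictMonoOn.mono hsub).injOn]
  obtain ⟨-, -, -, -, hpos, -⟩ := hw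
  refine setIntegral_congr_fun measurableSet_Icc fun x hx => ?_
  simp [abs_of_pos (hpos x (hsub hx))]

theorem integrableOn_comp_mul (hw : IsWarping γ γd) {f : ℝ → ℝ}
    (hf : IntegrableOn f (Icc 0 1)) : IntegrableOn (fun x => γd x * f (γ x)) (Icc 0 1) := by
  have himage : γ '' Icc 0 1 = Icc 0 1 := by
    rw [hw.image_Icc_zero ⟨zero_le_one, le_rfl⟩, hw.2.1]
  refine ((integrableOn_image_iff_integrableOn_abs_deriv_smul measurableSet_Icc
    (fun x hx => (hw.2.2.2.1 x hx).hasDerivWithinAt) hw.strictMonoOn.injOn f).1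
    (by rwa [himage])).congr_fun (fun x hx => ?_) measurableSet_Icc
  obtain ⟨-, -, -, -, hpos, -⟩ := hw
  simp [abs_of_pos (hpos x hx)]

theorem sq_warpAction (hw : IsWarping γ γd) {x : ℝ} (hx : x ∈ Icc (0 : ℝ) 1) (q : ℝ → ℝ) :
    warpAction q γ γd x ^ 2 = γd x * q (γ x) ^ 2 := by
  rw [warpAction, mul_pow, Real.sq_sqrt (hw.2.2.2.2.1 x hx).le, mul_comm]

theorem setIntegral_Icc_sq_warpAction (hw : IsWarping γ γd) {t : ℝ} (ht : t ∈ Icc (0 : ℝ) 1)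
    (q : ℝ → ℝ) : ∫ x in Icc 0 t, warpAction q γ γd x ^ 2 = ∫ x in Icc 0 (γ t), q x ^ 2 := by
  rw [setIntegral_congr_fun measurableSet_Icc
    fun x hx => hw.sq_warpAction (Icc_subset_Icc le_rfl ht.2 hx) q]
  exact hw.setIntegral_Icc_comp_mul ht fun x => q x ^ 2

theorem memLp_warpAction (hw : IsWarping γ γd) {q : ℝ → ℝ}
    (hq : MemLp q 2 (volume.restrict (Icc 0 1))) :
    MemLp (warpAction q γ γd) 2 (volume.restrict (Icc 0 1)) := by
  have hsq := hw.integrableOn_comp_mul hq.integrable_sq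
  -- `q ∘ γ` need not be measurable a priori; `γ' · (q ∘ γ)` is, being integrable.
  have hmeas : AEStronglyMeasurable (warpAction q γ γd) (volume.restrict (Icc 0 1)) := by
    have hint := hw.integrableOn_comp_mul (hq.integrable one_le_two)
    obtain ⟨-, -, -, -, hpos, hcont⟩ := hw
    refine (hint.aestronglyMeasurable.div₀ ((Real.continuous_sqrt.comp_continuousOn
      hcont).aestronglyMeasurable measurableSet_Icc)).congr ?_
    filter_upwards [ae_restrict_mem measurableSet_Icc] with x hx
    simp only [Pi.div_apply, Function.comp_apply, warpAction]
    rw [div_eq_iff (Real.sqrt_pos.2 (hpos x hx)).ne', mul_assoc,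
      Real.mul_self_sqrt (hpos x hx).le, mul_comm]
  refine (memLp_two_iff_integrable_sq hmeas).2 ?_
  exact hsq.congr_fun
    (fun x hx => (hw.sq_warpAction hx q).symm) measurableSet_Icc

end IsWarping

/-- If `q ∈ L²([0,1])` vanishes only on a Lebesgue-null set and `c > 0`, then any warping
`γ*` minimizing `γ ↦ ‖c q − (q,γ)‖` over all warpings must be the identity on `[0,1]`. -/
theorem unique_minimizer_is_identity (q : ℝ → ℝ) (c : ℝ) (hc : 0 < c)
    (hq : MemLp q 2 (volume.restrict (Icc (0:ℝ) 1)))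
    (hzero : volume {t ∈ Icc (0:ℝ) 1 | q t = 0} = 0)
    (γs γsd : ℝ → ℝ) (hws : IsWarping γs γsd)
    (hmin : ∀ γ γd : ℝ → ℝ, IsWarping γ γd →
      (∫ t in (0:ℝ)..1, (c * q t - q (γs t) * Real.sqrt (γsd t))^2)
        ≤ ∫ t in (0:ℝ)..1, (c * q t - q (γ t) * Real.sqrt (γd t))^2) :
    ∀ t ∈ Icc (0:ℝ) 1, γs t = t := by
  intro t ht
  have ⟨_, hγ1, hmaps, _⟩ := hws
  have hid := hmin id (fun _ => 1) IsWarping.id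
  simp only [id_eq, Real.sqrt_one, mul_one, integral_of_le zero_le_one,
    ← integral_Icc_eq_integral_Ioc] at hid
  have hae : q =ᵐ[volume.restrict (Icc 0 1)] warpAction q γs γsd :=
    ae_eq_of_integral_sq_const_mul_sub_le hc hq (hws.memLp_warpAction hq)
      (by simpa only [hγ1] using hws.setIntegral_Icc_sq_warpAction ⟨zero_le_one, le_rfl⟩ q)
      hid
  have hF : ∫ x in Icc 0 (γs t), q x ^ 2 = ∫ x in Icc 0 t, q x ^ 2 := by
    rw [← hws.setIntegral_Icc_sq_warpAction ht q]
    refine integral_congr_ae ?_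
    filter_upwards [ae_restrict_of_ae_restrict_of_subset (Icc_subset_Icc le_rfl ht.2) hae]
      with x hx
    rw [hx]
  have hmono := strictMonoOn_setIntegral_Icc hq.integrable_sq (fun x => sq_nonneg (q x))
    (by simpa only [pow_eq_zero_iff two_ne_zero] using hzero)
  exact hmono.injOn (hmaps ht) ht hF
end

section
/- Let q ∈ L²([0,1],ℝ) with {t : q(t) = 0} of measure zero and let γ* ∈ Γ satisfy q(t) = q(γ*(t))√(γ*'(t)) for almost every t. Then γ* = γ_id. -/
open MeasureTheory Set intervalIntegral

/-! With `F t = ∫₀ᵗ q²`, the fixed-point equation and the change of variables `u = γ*(x)` give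
`F (γ* t) = F t`. Since `q` vanishes only on a null set, `F` is strictly increasing on `[0,1]`,
hence injective there, so `γ* t = t`. -/

theorem strictMonoOn_integral_of_nonneg_of_ae_ne_zero {f : ℝ → ℝ} {a b : ℝ}
    (hfi : IntegrableOn f (Icc a b)) (hf : ∀ x ∈ Icc a b, 0 ≤ f x)
    (hzero : volume {x ∈ Icc a b | f x = 0} = 0) :
    StrictMonoOn (fun t => ∫ x in a..t, f x) (Icc a b) := by
  intro s hs t ht hst
  have hsub : Ioc s t ⊆ Icc a b := fun x hx => ⟨hs.1.trans hx.1.le, hx.2.trans ht.2⟩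
  have hint : ∀ c ∈ Icc a b, ∀ d ∈ Icc a b, c ≤ d → IntervalIntegrable f volume c d :=
    fun c hc d hd hcd => (intervalIntegrable_iff_integrableOn_Icc_of_le hcd).mpr
      (hfi.mono_set (Icc_subset_Icc hc.1 hd.2))
  have ha : a ∈ Icc a b := ⟨le_rfl, hs.1.trans hs.2⟩
  suffices 0 < ∫ x in s..t, f x by
    rw [← integral_interval_sub_left (hint a ha t ht ht.1) (hint a ha s hs hs.1)] at this
    exact sub_pos.mp this
  have hnull : volume (Ioc s t \ Function.support f) = 0 :=
    measure_mono_null (t := {x ∈ Icc a b | f x = 0})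
      (fun x hx => ⟨hsub hx.1, Function.notMem_support.mp hx.2⟩) hzero
  have hvol : volume (Ioc s t) ≤ volume (Function.support f ∩ Ioc s t) := by
    simpa [hnull, inter_comm] using
      measure_le_inter_add_sdiff volume (Ioc s t) (Function.support f)
  have hnonneg : 0 ≤ᵐ[volume.restrict (uIoc s t)] f := by
    rw [uIoc_of_le hst.le]
    exact (ae_restrict_iff' measurableSet_Ioc).mpr (.of_forall fun x hx => hf x (hsub hx))
  rw [integral_pos_iff_support_of_nonneg_ae' hnonneg (hint s hs t ht hst.le)]
  exact ⟨hst, (by simpa using hst : 0 < volume (Ioc s t)).trans_le hvol⟩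

theorem IsWarping.integral_deriv_smul_comp {E : Type*} [NormedAddCommGroup E] [NormedSpace ℝ E]
    {γ γd : ℝ → ℝ} (hw : IsWarping γ γd) {t : ℝ} (ht : t ∈ Icc (0:ℝ) 1) (g : ℝ → E) :
    ∫ x in (0:ℝ)..t, γd x • g (γ x) = ∫ u in (0:ℝ)..γ t, g u := by
  obtain ⟨h0, -, hmaps, hderiv, hpos, -⟩ := hw
  have hsub : Icc 0 t ⊆ Icc (0:ℝ) 1 := Icc_subset_Icc_right ht.2
  rw [integral_of_le ht.1, integral_of_le (hmaps ht).1,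
    ← integral_Icc_eq_integral_Ioc (f := fun x => γd x • g (γ x)),
    ← integral_Icc_eq_integral_Ioc (f := g)]
  simpa only [h0] using integral_Icc_deriv_smul_of_deriv_nonneg (g := g)
    (fun x hx => (hderiv x (hsub hx)).continuousAt.continuousWithinAt)
    (fun x hx => hderiv x (hsub (Ioo_subset_Icc_self hx)))
    (fun x hx => (hpos x (hsub (Ioo_subset_Icc_self hx))).le) ht.1

/-- If `q ∈ L²([0,1])` vanishes only on a null set and a warping `γ*` satisfies
`q(t) = q(γ*(t))·√(γ*'(t))` for a.e. `t ∈ [0,1]`, then `γ*` is the identity on `[0,1]`. -/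
theorem fixed_point_warping_is_identity (q : ℝ → ℝ)
    (hq : MemLp q 2 (volume.restrict (Icc (0:ℝ) 1)))
    (hzero : volume {t ∈ Icc (0:ℝ) 1 | q t = 0} = 0)
    (γs γsd : ℝ → ℝ) (hws : IsWarping γs γsd)
    (hfix : ∀ᵐ t ∂(volume.restrict (Icc (0:ℝ) 1)),
      q t = q (γs t) * Real.sqrt (γsd t)) :
    ∀ t ∈ Icc (0:ℝ) 1, γs t = t := by
  have hcov := fun t (ht : t ∈ Icc (0:ℝ) 1) =>
    hws.integral_deriv_smul_comp ht (fun x => q x ^ 2)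
  obtain ⟨-, -, hmaps, -, hpos, -⟩ := hws
  have hFmono : StrictMonoOn (fun t => ∫ x in (0:ℝ)..t, q x ^ 2) (Icc 0 1) :=
    strictMonoOn_integral_of_nonneg_of_ae_ne_zero hq.integrable_sq (fun x _ => sq_nonneg _)
      (by simpa using hzero)
  have hsq : ∀ᵐ x, x ∈ Icc (0:ℝ) 1 → γsd x • q (γs x) ^ 2 = q x ^ 2 := by
    filter_upwards [(ae_restrict_iff' measurableSet_Icc).mp hfix] with x hx hx01
    rw [hx hx01, mul_pow, Real.sq_sqrt (hpos x hx01).le, smul_eq_mul, mul_comm]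
  intro t ht
  refine hFmono.injOn (hmaps ht) ht ?_
  rw [← hcov t ht]
  refine integral_congr_ae ?_
  filter_upwards [hsq] with x hx hxt
  rw [uIoc_of_le ht.1] at hxt
  exact hx ⟨hxt.1.le, hxt.2.trans ht.2⟩
end
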